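/- Let A = (M₁+φ) − (N₁+φ) be an H-splitting of an H₊-matrix A ∈ ℝ^{n×n} (i.e. ⟨M₁+φ⟩ − |N₁+φ| is a nonsingular M-matrix), with φ diagonal and φ₁, φ₂ positive diagonal, G ≥ 0 a matrix, and D_{φ₁} = φ₁·diag(A). Let U be a positive diagonal matrix such that (⟨M₁+φ⟩ − |N₁+φ|)U is strictly diagonally dominant, and let e = (1,…,1)ᵀ. If 0 < φ₂ < D_{φ₁} and (φ₂ − D_{φ₁} + ⟨M_{φ₁}+φ_{φ₁}⟩ − |N_{φ₁}+φ_{φ₁}| − φ₂G)Ue > 0, then ρ(L̄) < 1 for L̄ = (⟨M_{φ₁}⟩ + |φ_{φ₁}| + φ₂)⁻¹(|N_{φ₁}+φ_{φ₁}| + |A_{φ₁}−φ₂| + 2φ₂G), so Method 3.1 is convergent. -/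

import Mathlib

open Matrix Finset

noncomputable def specRad {n : ℕ} (A : Matrix (Fin n) (Fin n) ℝ) : ℝ :=
  (spectralRadius ℂ (A.map (algebraMap ℝ ℂ))).toReal

def matAbs {n : ℕ} (A : Matrix (Fin n) (Fin n) ℝ) : Matrix (Fin n) (Fin n) ℝ :=
  fun i j => |A i j|

def vecAbs {n : ℕ} (x : Fin n → ℝ) : Fin n → ℝ := fun i => |x i|

def cmpMat {n : ℕ} (A : Matrix (Fin n) (Fin n) ℝ) : Matrix (Fin n) (Fin n) ℝ :=
  fun i j => if i = j then |A i j| else -|A i j|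

def PosDiag {n : ℕ} (Φ : Matrix (Fin n) (Fin n) ℝ) : Prop :=
  Φ.IsDiag ∧ ∀ i, 0 < Φ i i

def ZMat {n : ℕ} (A : Matrix (Fin n) (Fin n) ℝ) : Prop :=
  ∀ i j, i ≠ j → A i j ≤ 0

def NonsingularMMatrix {n : ℕ} (A : Matrix (Fin n) (Fin n) ℝ) : Prop :=
  ZMat A ∧ IsUnit A.det ∧ ∀ i j, 0 ≤ A⁻¹ i j

def SDD {n : ℕ} (A : Matrix (Fin n) (Fin n) ℝ) : Prop :=
  ∀ i, ∑ j ∈ Finset.univ.erase i, |A i j| < |A i i|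

def ICPsol {n : ℕ} (A : Matrix (Fin n) (Fin n) ℝ) (q : Fin n → ℝ)
    (ψ : (Fin n → ℝ) → (Fin n → ℝ)) (z : Fin n → ℝ) : Prop :=
  (∀ i, 0 ≤ (A *ᵥ z + q) i) ∧ (∀ i, 0 ≤ (z - ψ z) i) ∧ (A *ᵥ z + q) ⬝ᵥ (z - ψ z) = 0

def HplusMatrix {n : ℕ} (A : Matrix (Fin n) (Fin n) ℝ) : Prop :=
  NonsingularMMatrix (cmpMat A) ∧ ∀ i, 0 < A i i

/-!
Write `X = φ₁(M₁ + φ)`, `Z = φ₁(N₁ + φ)`, `B = X + φ₂`, `R = |Z| + |A_{φ₁} - φ₂| + 2φ₂G` and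
`u = Ue > 0`. An entrywise comparison shows that twice the matrix of the hypothesis is at most
`⟨B⟩ - R`, so `Ru < ⟨B⟩u`; since also `⟨B⟩ ≤ W := ⟨M_{φ₁}⟩ + |φ_{φ₁}| + φ₂`, we get `Ru < Wu`.
For a Z-matrix `T` with `Ru < Tu` the inverse is nonnegative and `T⁻¹R u < u`, so `T⁻¹R`
contracts the `u`-weighted max norm. With `T = W` this bounds `ρ(L̄)`. With `T = ⟨B⟩`:
complementarity makes `z*` a fixed point of the iteration and the modulus map is entrywise
`R`-Lipschitz, so `|z_{k+1} - z*| ≤ ⟨B⟩⁻¹R |z_k - z*|` and the errors decay geometrically.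
-/

open Filter Topology

variable {n : ℕ}

lemma Matrix.IsDiag.mul_apply {D : Matrix (Fin n) (Fin n) ℝ} (hD : D.IsDiag)
    (M : Matrix (Fin n) (Fin n) ℝ) (i j : Fin n) : (D * M) i j = D i i * M i j := by
  conv_lhs => rw [← hD.diagonal_diag]
  rw [diagonal_mul, diag_apply]

lemma Matrix.IsDiag.mul {D E : Matrix (Fin n) (Fin n) ℝ} (hD : D.IsDiag) (hE : E.IsDiag) :
    (D * E).IsDiag := fun i j hij => by
  show (D * E) i j = 0
  rw [hD.mul_apply, hE hij, mul_zero]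

lemma Matrix.IsDiag.mulVec_apply {D : Matrix (Fin n) (Fin n) ℝ} (hD : D.IsDiag)
    (v : Fin n → ℝ) (i : Fin n) : (D *ᵥ v) i = D i i * v i := by
  conv_lhs => rw [← hD.diagonal_diag]
  rw [mulVec_diagonal, diag_apply]

lemma Matrix.IsDiag.mul_diagonal_diag {D : Matrix (Fin n) (Fin n) ℝ} (hD : D.IsDiag)
    (M : Matrix (Fin n) (Fin n) ℝ) : D * diagonal M.diag = diagonal (D * M).diag := by
  ext i j
  rw [hD.mul_apply]
  rcases eq_or_ne i j with rfl | hij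
  · simp [hD.mul_apply]
  · simp [hij]

lemma abs_mulVec_le (M : Matrix (Fin n) (Fin n) ℝ) (v : Fin n → ℝ) (i : Fin n) :
    |(M *ᵥ v) i| ≤ (matAbs M *ᵥ vecAbs v) i := by
  simp only [mulVec, dotProduct, matAbs, vecAbs, ← abs_mul]
  exact abs_sum_le_sum_abs _ _

lemma mulVec_apply_eq_diag_add_sum_erase (M : Matrix (Fin n) (Fin n) ℝ) (v : Fin n → ℝ)
    (i : Fin n) : (M *ᵥ v) i = M i i * v i + ∑ j ∈ univ.erase i, M i j * v j := by
  rw [mulVec, dotProduct, ← add_sum_erase _ _ (mem_univ i)]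

lemma PosDiag.nonneg {Φ : Matrix (Fin n) (Fin n) ℝ} (hΦ : PosDiag Φ) (i j : Fin n) :
    0 ≤ Φ i j := by
  rcases eq_or_ne i j with rfl | hij
  · exact (hΦ.2 i).le
  · exact (hΦ.1 hij).ge

lemma zMat_cmpMat (B : Matrix (Fin n) (Fin n) ℝ) : ZMat (cmpMat B) := fun i j hij => by
  simp [cmpMat, hij]

lemma cmpMat_apply_add_le (P Q : Matrix (Fin n) (Fin n) ℝ) (i j : Fin n) :
    cmpMat (P + Q) i j ≤ cmpMat P i j + matAbs Q i j := by
  by_cases hij : i = j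
  · simpa [cmpMat, matAbs, hij] using abs_add_le (P j j) (Q j j)
  · simp only [cmpMat, matAbs, hij, if_false, Matrix.add_apply]
    have := abs_add' (P i j) (Q i j)
    rw [add_comm (Q i j)] at this
    linarith

lemma cmpMat_mulVec_vecAbs_le (B : Matrix (Fin n) (Fin n) ℝ) (y : Fin n → ℝ) (i : Fin n) :
    (cmpMat B *ᵥ vecAbs y) i ≤ |(B *ᵥ y) i| := by
  have hoff : |∑ j ∈ univ.erase i, B i j * y j| ≤ ∑ j ∈ univ.erase i, |B i j| * |y j| := by
    simpa only [abs_mul] using abs_sum_le_sum_abs (fun j => B i j * y j) (univ.erase i)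
  have hcmp : ∑ j ∈ univ.erase i, cmpMat B i j * vecAbs y j
      = -∑ j ∈ univ.erase i, |B i j| * |y j| := by
    rw [← sum_neg_distrib]
    refine sum_congr rfl fun j hj => ?_
    simp [cmpMat, (ne_of_mem_erase hj).symm, vecAbs]
  have hdiag : cmpMat B i i * vecAbs y i = |B i i * y i| := by simp [cmpMat, vecAbs, abs_mul]
  rw [mulVec_apply_eq_diag_add_sum_erase, mulVec_apply_eq_diag_add_sum_erase, hcmp, hdiag]
  linarith [abs_sub_abs_le_abs_add (B i i * y i) (∑ j ∈ univ.erase i, B i j * y j)]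

lemma zMat_cmpMat_add_matAbs_add (P : Matrix (Fin n) (Fin n) ℝ) {Q D : Matrix (Fin n) (Fin n) ℝ}
    (hQ : Q.IsDiag) (hD : D.IsDiag) : ZMat (cmpMat P + matAbs Q + D) := fun i j hij => by
  simp [cmpMat, matAbs, hij, hQ hij, hD hij]

lemma cmpMat_add_add_apply_le (P Q : Matrix (Fin n) (Fin n) ℝ) {D : Matrix (Fin n) (Fin n) ℝ}
    (hD : ∀ i j, 0 ≤ D i j) (i j : Fin n) :
    cmpMat (P + Q + D) i j ≤ (cmpMat P + matAbs Q + D) i j := by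
  have := cmpMat_apply_add_le P (Q + D) i j
  simp only [add_assoc, matAbs, Matrix.add_apply] at this ⊢
  linarith [abs_add_le (Q i j) (D i j), abs_of_nonneg (hD i j)]

namespace ZMat

variable {T R : Matrix (Fin n) (Fin n) ℝ} {u : Fin n → ℝ} (hT : ZMat T) (hu : ∀ i, 0 < u i)
include hT hu

section

variable (hTu : ∀ i, 0 < (T *ᵥ u) i)
include hTu

lemma nonneg_of_mulVec_nonneg {x : Fin n → ℝ} (hx : ∀ i, 0 ≤ (T *ᵥ x) i) (i : Fin n) : 0 ≤ x i := by
  by_contra! hneg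
  obtain ⟨k, -, hk⟩ := exists_max_image univ (fun j => -x j / u j) ⟨i, mem_univ i⟩
  set t := -x k / u k
  have ht : 0 < t := (div_pos (neg_pos.2 hneg) (hu i)).trans_le (hk i (mem_univ i))
  have hxk : x k = -(t * u k) := by simp only [t, div_mul_cancel₀ _ (hu k).ne', neg_neg]
  have hxj : ∀ j, -(t * u j) ≤ x j := fun j => by
    have := hk j (mem_univ j)
    rw [div_le_iff₀ (hu j)] at this
    linarith
  have hTx : (T *ᵥ x) k ≤ -(t * (T *ᵥ u) k) := by
    rw [mulVec_apply_eq_diag_add_sum_erase, mulVec_apply_eq_diag_add_sum_erase, hxk,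
      mul_add, mul_sum, neg_add, ← sum_neg_distrib]
    refine add_le_add (le_of_eq (by ring)) (sum_le_sum fun j hj => ?_)
    have := mul_le_mul_of_nonpos_left (hxj j) (hT k j (ne_of_mem_erase hj).symm)
    linarith
  nlinarith [hx k, hTu k]

lemma isUnit_det : IsUnit T.det := by
  rw [isUnit_iff_ne_zero]
  intro hdet
  obtain ⟨v, hv0, hv⟩ := exists_mulVec_eq_zero_iff.2 hdet
  refine hv0 (funext fun i => le_antisymm ?_ ?_)
  · simpa using hT.nonneg_of_mulVec_nonneg hu hTu (x := -v) (by simp [mulVec_neg, hv]) i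
  · exact hT.nonneg_of_mulVec_nonneg hu hTu (by simp [hv]) i

lemma inv_nonneg (i j : Fin n) : 0 ≤ T⁻¹ i j := by
  refine hT.nonneg_of_mulVec_nonneg hu hTu (x := fun l => T⁻¹ l j) (fun k => ?_) i
  have : (T *ᵥ fun l => T⁻¹ l j) k = (T * T⁻¹) k j := by simp [mulVec, dotProduct, mul_apply]
  rw [this, mul_nonsing_inv _ (hT.isUnit_det hu hTu), one_apply]
  split_ifs <;> norm_num

lemma inv_mulVec_pos {v : Fin n → ℝ} (hv : ∀ i, 0 < v i) (i : Fin n) : 0 < (T⁻¹ *ᵥ v) i := by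
  set y := T⁻¹ *ᵥ v
  have hTy : T *ᵥ y = v := by
    rw [mulVec_mulVec, mul_nonsing_inv _ (hT.isUnit_det hu hTu), one_mulVec]
  have hy : ∀ j, 0 ≤ y j := hT.nonneg_of_mulVec_nonneg hu hTu fun j => hTy ▸ (hv j).le
  have hoff : ∑ j ∈ univ.erase i, T i j * y j ≤ 0 :=
    sum_nonpos fun j hj => mul_nonpos_of_nonpos_of_nonneg (hT i j (ne_of_mem_erase hj).symm) (hy j)
  have hdiag : 0 < T i i * y i := by
    have := hv i
    rw [← hTy, mulVec_apply_eq_diag_add_sum_erase] at this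
    linarith
  exact (hy i).lt_of_ne fun h => by simp [← h] at hdiag

end

lemma inv_mul_nonneg (hR : ∀ i j, 0 ≤ R i j)
    (hRT : ∀ i, (R *ᵥ u) i < (T *ᵥ u) i) (i j : Fin n) : 0 ≤ (T⁻¹ * R) i j := by
  have hTu i := (dotProduct_nonneg_of_nonneg (hR i) fun j => (hu j).le).trans_lt (hRT i)
  rw [mul_apply]
  exact sum_nonneg fun k _ => mul_nonneg (hT.inv_nonneg hu hTu i k) (hR k j)

lemma inv_mul_mulVec_lt (hR : ∀ i j, 0 ≤ R i j)
    (hRT : ∀ i, (R *ᵥ u) i < (T *ᵥ u) i) (i : Fin n) : ((T⁻¹ * R) *ᵥ u) i < u i := by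
  have hTu i := (dotProduct_nonneg_of_nonneg (hR i) fun j => (hu j).le).trans_lt (hRT i)
  have hpos := hT.inv_mulVec_pos hu hTu (v := T *ᵥ u - R *ᵥ u) (fun j => sub_pos.2 (hRT j)) i
  rw [← mulVec_mulVec]
  rwa [mulVec_sub, mulVec_mulVec, nonsing_inv_mul _ (hT.isUnit_det hu hTu), one_mulVec,
    Pi.sub_apply, sub_pos] at hpos

end ZMat

lemma vecAbs_le_cmpMat_inv_mulVec {B : Matrix (Fin n) (Fin n) ℝ} {u : Fin n → ℝ}
    (hu : ∀ i, 0 < u i) (hBu : ∀ i, 0 < (cmpMat B *ᵥ u) i) {x y : Fin n → ℝ}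
    (hxy : ∀ i, |(B *ᵥ x) i| ≤ y i) (i : Fin n) : |x i| ≤ ((cmpMat B)⁻¹ *ᵥ y) i := by
  have hT := zMat_cmpMat B
  have hinv : cmpMat B *ᵥ ((cmpMat B)⁻¹ *ᵥ y) = y := by
    rw [mulVec_mulVec, mul_nonsing_inv _ (hT.isUnit_det hu hBu), one_mulVec]
  have := hT.nonneg_of_mulVec_nonneg hu hBu (x := (cmpMat B)⁻¹ *ᵥ y - vecAbs x) (fun j => by
    rw [mulVec_sub, hinv, Pi.sub_apply, sub_nonneg]
    exact (cmpMat_mulVec_vecAbs_le B x j).trans (hxy j)) i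
  rwa [Pi.sub_apply, sub_nonneg] at this

lemma isUnit_det_of_cmpMat {B : Matrix (Fin n) (Fin n) ℝ} {u : Fin n → ℝ}
    (hu : ∀ i, 0 < u i) (hBu : ∀ i, 0 < (cmpMat B *ᵥ u) i) : IsUnit B.det := by
  rw [isUnit_iff_ne_zero]
  intro hdet
  obtain ⟨v, hv0, hv⟩ := exists_mulVec_eq_zero_iff.2 hdet
  refine hv0 (funext fun i => abs_nonpos_iff.1 ?_)
  simpa using vecAbs_le_cmpMat_inv_mulVec hu hBu (y := 0) (by simp [hv]) i

lemma exists_eigenvector_of_mem_spectrum {C : Matrix (Fin n) (Fin n) ℝ} {k : ℂ}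
    (hk : k ∈ spectrum ℂ (C.map (algebraMap ℝ ℂ))) :
    ∃ v : Fin n → ℂ, v ≠ 0 ∧ ∀ i, k * v i = ∑ j, (C i j : ℂ) * v j := by
  rw [spectrum.mem_iff, isUnit_iff_isUnit_det, isUnit_iff_ne_zero, not_not] at hk
  obtain ⟨v, hv0, hv⟩ := exists_mulVec_eq_zero_iff.2 hk
  refine ⟨v, hv0, fun i => ?_⟩
  have := congrFun hv i
  simp only [sub_mulVec, Algebra.algebraMap_eq_smul_one, smul_mulVec, one_mulVec,
    Pi.sub_apply, Pi.smul_apply, smul_eq_mul, Pi.zero_apply, sub_eq_zero] at this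
  simpa [mulVec, dotProduct] using this

section WeightedMaxNorm

variable {C : Matrix (Fin n) (Fin n) ℝ} {u : Fin n → ℝ}

lemma exists_mulVec_le_mul_of_lt (hCu : ∀ i, (C *ᵥ u) i < u i) :
    ∃ c, 0 ≤ c ∧ c < 1 ∧ ∀ i, (C *ᵥ u) i ≤ c * u i := by
  have h : ∀ i, ∀ᶠ c in 𝓝 (1 : ℝ), (C *ᵥ u) i < c * u i := fun i =>
    (tendsto_id.mul_const (u i)).eventually_const_lt (by simpa using hCu i)
  obtain ⟨c, ⟨hc0, hc1⟩, hc⟩ :=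
    ((eventually_mem_set.2 (Ioo_mem_nhdsLT zero_lt_one)).and
      (nhdsWithin_le_nhds (eventually_all.2 h))).exists
  exact ⟨c, hc0.le, hc1, fun i => (hc i).le⟩

lemma mulVec_le_of_le_mul (hC : ∀ i j, 0 ≤ C i j) {c t : ℝ} (ht : 0 ≤ t)
    (hCu : ∀ i, (C *ᵥ u) i ≤ c * u i) {x : Fin n → ℝ} (hx : ∀ j, x j ≤ t * u j) (i : Fin n) :
    (C *ᵥ x) i ≤ c * t * u i :=
  calc (C *ᵥ x) i ≤ (C *ᵥ (t • u)) i := dotProduct_le_dotProduct_of_nonneg_left hx (hC i)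
    _ = t * (C *ᵥ u) i := by rw [mulVec_smul, Pi.smul_apply, smul_eq_mul]
    _ ≤ c * t * u i := by nlinarith [hCu i]

variable (hC : ∀ i j, 0 ≤ C i j) (hu : ∀ i, 0 < u i) (hCu : ∀ i, (C *ᵥ u) i < u i)
include hC hu hCu

/-- The Collatz–Wielandt bound for a nonnegative matrix. -/
lemma specRad_lt_one_of_mulVec_lt : specRad C < 1 := by
  obtain ⟨c, hc0, hc1, hc⟩ := exists_mulVec_le_mul_of_lt hCu
  have hnorm : ∀ k ∈ spectrum ℂ (C.map (algebraMap ℝ ℂ)), ‖k‖ ≤ c := by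
    intro k hk
    obtain ⟨v, hv0, hv⟩ := exists_eigenvector_of_mem_spectrum hk
    obtain ⟨l, hl⟩ := Function.ne_iff.1 hv0
    obtain ⟨i, -, hi⟩ := exists_max_image univ (fun j => ‖v j‖ / u j) ⟨l, mem_univ l⟩
    set t := ‖v i‖ / u i
    have ht : 0 < t := (div_pos (norm_pos_iff.2 hl) (hu l)).trans_le (hi l (mem_univ l))
    have hvi : ‖v i‖ = t * u i := (div_mul_cancel₀ _ (hu i).ne').symm
    have hvt : ∀ j, ‖v j‖ ≤ t * u j := fun j => (div_le_iff₀ (hu j)).1 (hi j (mem_univ j))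
    have hle : ‖k‖ * (t * u i) ≤ c * (t * u i) :=
      calc ‖k‖ * (t * u i) = ‖∑ j, (C i j : ℂ) * v j‖ := by rw [← hvi, ← norm_mul, hv]
        _ ≤ ∑ j, C i j * ‖v j‖ := (norm_sum_le _ _).trans_eq <| sum_congr rfl fun j _ => by
              rw [norm_mul, Complex.norm_real, Real.norm_of_nonneg (hC i j)]
        _ ≤ c * t * u i := mulVec_le_of_le_mul hC ht.le hc hvt i
        _ = c * (t * u i) := mul_assoc _ _ _
    exact le_of_mul_le_mul_right hle (mul_pos ht (hu i))
  refine (ENNReal.toReal_le_of_le_ofReal hc0 (iSup₂_le fun k hk => ?_)).trans_lt hc1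
  have := ENNReal.ofReal_le_ofReal (hnorm k hk)
  rwa [ofReal_norm] at this

lemma tendsto_of_abs_sub_le_mulVec {z : ℕ → Fin n → ℝ} {z₀ : Fin n → ℝ}
    (hz : ∀ k i, |z (k + 1) i - z₀ i| ≤ (C *ᵥ vecAbs (z k - z₀)) i) :
    Tendsto z atTop (𝓝 z₀) := by
  obtain ⟨c, hc0, hc1, hc⟩ := exists_mulVec_le_mul_of_lt hCu
  set t := ∑ j, |z 0 j - z₀ j| / u j
  have ht : 0 ≤ t := sum_nonneg fun j _ => div_nonneg (abs_nonneg _) (hu j).le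
  have hbound : ∀ k i, |z k i - z₀ i| ≤ c ^ k * t * u i := by
    intro k
    induction k with
    | zero =>
      intro i
      rw [pow_zero, one_mul, ← div_le_iff₀ (hu i)]
      exact single_le_sum (f := fun j => |z 0 j - z₀ j| / u j)
        (fun j _ => div_nonneg (abs_nonneg _) (hu j).le) (mem_univ i)
    | succ k ih =>
      intro i
      rw [pow_succ', mul_assoc c]
      exact (hz k i).trans (mulVec_le_of_le_mul hC (mul_nonneg (pow_nonneg hc0 k) ht) hc ih i)
  refine tendsto_pi_nhds.2 fun i => tendsto_sub_nhds_zero_iff.1 ?_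
  refine squeeze_zero_norm (fun k => (hbound k i).trans_eq (mul_assoc _ _ _)) ?_
  simpa using (tendsto_pow_atTop_nhds_zero_of_lt_one hc0 hc1).mul_const (t * u i)

end WeightedMaxNorm

lemma ZMat.specRad_inv_mul_lt_one {T R : Matrix (Fin n) (Fin n) ℝ} {u : Fin n → ℝ}
    (hT : ZMat T) (hu : ∀ i, 0 < u i) (hR : ∀ i j, 0 ≤ R i j)
    (hRT : ∀ i, (R *ᵥ u) i < (T *ᵥ u) i) : specRad (T⁻¹ * R) < 1 :=
  specRad_lt_one_of_mulVec_lt (hT.inv_mul_nonneg hu hR hRT) hu (hT.inv_mul_mulVec_lt hu hR hRT)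

/-- With `N = N_{φ₁} + φ_{φ₁}`, `P = A_{φ₁} - φ₂`, `Φ = φ₂` and `b = φ₁ q` this is the
right-hand side of Method 3.1. -/
def modulusRhs (N P Φ : Matrix (Fin n) (Fin n) ℝ) (b : Fin n → ℝ)
    (ψ : (Fin n → ℝ) → Fin n → ℝ) (z : Fin n → ℝ) : Fin n → ℝ :=
  N *ᵥ z + vecAbs (P *ᵥ z + b + Φ *ᵥ ψ z) - b + Φ *ᵥ ψ z

lemma abs_modulusRhs_sub_le (N P : Matrix (Fin n) (Fin n) ℝ) {Φ G : Matrix (Fin n) (Fin n) ℝ}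
    (hΦ : Φ.IsDiag) (hΦ0 : ∀ i, 0 ≤ Φ i i) (b : Fin n → ℝ) {ψ : (Fin n → ℝ) → Fin n → ℝ}
    (hψ : ∀ x y i, |ψ x i - ψ y i| ≤ (G *ᵥ vecAbs (x - y)) i) (x y : Fin n → ℝ) (i : Fin n) :
    |(modulusRhs N P Φ b ψ x - modulusRhs N P Φ b ψ y) i|
      ≤ ((matAbs N + matAbs P + 2 • (Φ * G)) *ᵥ vecAbs (x - y)) i := by
  set d := x - y
  have hΦψ : |Φ i i * (ψ x i - ψ y i)| ≤ ((Φ * G) *ᵥ vecAbs d) i := by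
    rw [abs_mul, abs_of_nonneg (hΦ0 i), ← mulVec_mulVec, hΦ.mulVec_apply]
    exact mul_le_mul_of_nonneg_left (hψ x y i) (hΦ0 i)
  have hargs : |vecAbs (P *ᵥ x + b + Φ *ᵥ ψ x) i - vecAbs (P *ᵥ y + b + Φ *ᵥ ψ y) i|
      ≤ (matAbs P *ᵥ vecAbs d) i + ((Φ * G) *ᵥ vecAbs d) i := by
    refine (abs_abs_sub_abs_le_abs_sub _ _).trans ?_
    have : (P *ᵥ x + b + Φ *ᵥ ψ x) i - (P *ᵥ y + b + Φ *ᵥ ψ y) i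
        = (P *ᵥ d) i + Φ i i * (ψ x i - ψ y i) := by
      simp only [d, mulVec_sub, Pi.add_apply, Pi.sub_apply, hΦ.mulVec_apply]
      ring
    rw [this]
    exact (abs_add_le _ _).trans (add_le_add (abs_mulVec_le P d i) hΦψ)
  have hdiff : (modulusRhs N P Φ b ψ x - modulusRhs N P Φ b ψ y) i
      = (N *ᵥ d) i + (vecAbs (P *ᵥ x + b + Φ *ᵥ ψ x) i - vecAbs (P *ᵥ y + b + Φ *ᵥ ψ y) i)
        + Φ i i * (ψ x i - ψ y i) := by
    simp only [modulusRhs, d, mulVec_sub, Pi.add_apply, Pi.sub_apply, hΦ.mulVec_apply]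
    ring
  have hbound : ((matAbs N + matAbs P + 2 • (Φ * G)) *ᵥ vecAbs d) i
      = (matAbs N *ᵥ vecAbs d) i + (matAbs P *ᵥ vecAbs d) i + 2 * ((Φ * G) *ᵥ vecAbs d) i := by
    rw [add_mulVec, add_mulVec, smul_mulVec, Pi.add_apply, Pi.add_apply, Pi.smul_apply,
      two_nsmul, two_mul]
  rw [hdiff, hbound]
  linarith [abs_add_three ((N *ᵥ d) i)
    (vecAbs (P *ᵥ x + b + Φ *ᵥ ψ x) i - vecAbs (P *ᵥ y + b + Φ *ᵥ ψ y) i)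
    (Φ i i * (ψ x i - ψ y i)), abs_mulVec_le N d i]

namespace ICPsol

variable {A : Matrix (Fin n) (Fin n) ℝ} {q z : Fin n → ℝ} {ψ : (Fin n → ℝ) → Fin n → ℝ}

lemma mul_eq_zero (hz : ICPsol A q ψ z) (i : Fin n) : (A *ᵥ z + q) i * (z - ψ z) i = 0 :=
  (sum_eq_zero_iff_of_nonneg fun j _ => mul_nonneg (hz.1 j) (hz.2.1 j)).1 hz.2.2 i (mem_univ i)

/-- Complementarity turns the modulus into a sum. -/
lemma modulusRhs_eq (hz : ICPsol A q ψ z) (N : Matrix (Fin n) (Fin n) ℝ)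
    {Φ₁ Φ₂ : Matrix (Fin n) (Fin n) ℝ} (hΦ₁ : Φ₁.IsDiag) (hΦ₁0 : ∀ i, 0 ≤ Φ₁ i i)
    (hΦ₂ : Φ₂.IsDiag) (hΦ₂0 : ∀ i, 0 ≤ Φ₂ i i) :
    modulusRhs N (Φ₁ * A - Φ₂) Φ₂ (Φ₁ *ᵥ q) ψ z = (N + Φ₁ * A + Φ₂) *ᵥ z := by
  funext i
  set r := A *ᵥ z + q
  set s := z - ψ z
  have habs : |Φ₁ i i * r i - Φ₂ i i * s i| = Φ₁ i i * r i + Φ₂ i i * s i := by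
    have hrs : r i * s i = 0 := hz.mul_eq_zero i
    rcases _root_.mul_eq_zero.1 hrs with h | h <;>
      simp only [h, mul_zero, zero_sub, sub_zero, zero_add, add_zero, abs_neg]
    · exact abs_of_nonneg (mul_nonneg (hΦ₂0 i) (hz.2.1 i))
    · exact abs_of_nonneg (mul_nonneg (hΦ₁0 i) (hz.1 i))
  have harg : ((Φ₁ * A - Φ₂) *ᵥ z) i + (Φ₁ *ᵥ q) i + (Φ₂ *ᵥ ψ z) i
      = Φ₁ i i * r i - Φ₂ i i * s i := by
    simp only [r, s, sub_mulVec, ← mulVec_mulVec, Pi.add_apply, Pi.sub_apply, hΦ₁.mulVec_apply,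
      hΦ₂.mulVec_apply]
    ring
  simp only [modulusRhs, Pi.add_apply, Pi.sub_apply, vecAbs]
  rw [harg, habs]
  simp only [r, s, add_mulVec, ← mulVec_mulVec, Pi.add_apply, Pi.sub_apply, hΦ₁.mulVec_apply,
    hΦ₂.mulVec_apply]
  ring

end ICPsol

lemma two_mul_apply_le_cmpMat_add_sub (X Z W : Matrix (Fin n) (Fin n) ℝ) (hW : W.IsDiag)
    (hWlt : ∀ i, 0 < W i i ∧ W i i < X i i - Z i i) (i j : Fin n) :
    2 * (W - diagonal (X - Z).diag + cmpMat X - matAbs Z) i j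
      ≤ (cmpMat (X + W) - matAbs Z - matAbs (X - Z - W)) i j := by
  rcases eq_or_ne i j with rfl | hij
  · obtain ⟨hw, hwxz⟩ := hWlt i
    simp only [cmpMat, matAbs, Matrix.sub_apply, Matrix.add_apply, diagonal_apply_eq,
      diag_apply, if_true]
    rw [abs_of_pos (sub_pos.2 hwxz)]
    rcases abs_cases (X i i) with ⟨hx, hx'⟩ | ⟨hx, hx'⟩ <;>
      rcases abs_cases (Z i i) with ⟨hz, hz'⟩ | ⟨hz, hz'⟩ <;>
      rcases abs_cases (X i i + W i i) with ⟨hxw, hxw'⟩ | ⟨hxw, hxw'⟩ <;> linarith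
  · simp only [cmpMat, matAbs, Matrix.sub_apply, Matrix.add_apply, diagonal_apply_ne _ hij,
      hW hij, if_neg hij, add_zero, sub_zero]
    linarith [abs_sub (X i j) (Z i j)]

lemma matAbs_add_matAbs_add_two_nsmul_nonneg (N P : Matrix (Fin n) (Fin n) ℝ)
    {Φ G : Matrix (Fin n) (Fin n) ℝ} (hΦ : Φ.IsDiag) (hΦ0 : ∀ i, 0 ≤ Φ i i)
    (hG : ∀ i j, 0 ≤ G i j) (i j : Fin n) :
    0 ≤ (matAbs N + matAbs P + 2 • (Φ * G)) i j := by
  simp only [Matrix.add_apply, Matrix.smul_apply, matAbs, hΦ.mul_apply]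
  exact add_nonneg (add_nonneg (abs_nonneg _) (abs_nonneg _))
    (nsmul_nonneg (mul_nonneg (hΦ0 i) (hG i j)) 2)

/-- With `X = φ₁(M₁ + φ)`, `Z = φ₁(N₁ + φ)` and `W = φ₂`, the left-hand side is the hypothesis
of the theorem; the terms in `G` cancel in the entrywise comparison. -/
lemma matAbs_mulVec_lt_cmpMat_mulVec (X Z W G : Matrix (Fin n) (Fin n) ℝ) (hW : W.IsDiag)
    (hWlt : ∀ i, 0 < W i i ∧ W i i < X i i - Z i i) {u : Fin n → ℝ} (hu : ∀ i, 0 ≤ u i)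
    {i : Fin n} (hpos : 0 < ((W - diagonal (X - Z).diag + cmpMat X - matAbs Z - W * G) *ᵥ u) i) :
    ((matAbs Z + matAbs (X - Z - W) + 2 • (W * G)) *ᵥ u) i < (cmpMat (X + W) *ᵥ u) i := by
  set Y := W - diagonal (X - Z).diag + cmpMat X - matAbs Z - W * G
  set R := matAbs Z + matAbs (X - Z - W) + 2 • (W * G)
  have hentry : ∀ i j, ((2 : ℝ) • Y) i j ≤ (cmpMat (X + W) - R) i j := fun i j => by
    have := two_mul_apply_le_cmpMat_add_sub X Z W hW hWlt i j
    simp only [Y, R, Matrix.sub_apply, Matrix.add_apply, Matrix.smul_apply, smul_eq_mul,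
      two_nsmul] at this ⊢
    linarith
  have : (((2 : ℝ) • Y) *ᵥ u) i ≤ ((cmpMat (X + W) - R) *ᵥ u) i :=
    dotProduct_le_dotProduct_of_nonneg_right (hentry i) hu
  rw [smul_mulVec, sub_mulVec (cmpMat _) R, Pi.smul_apply, Pi.sub_apply, smul_eq_mul] at this
  linarith

theorem tendsto_of_modulusRhs_iterate {A N B Φ₁ Φ₂ G : Matrix (Fin n) (Fin n) ℝ}
    {u : Fin n → ℝ} (hB : B = N + Φ₁ * A + Φ₂) (hΦ₁ : Φ₁.IsDiag) (hΦ₁0 : ∀ i, 0 ≤ Φ₁ i i)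
    (hΦ₂ : Φ₂.IsDiag) (hΦ₂0 : ∀ i, 0 ≤ Φ₂ i i) (hG : ∀ i j, 0 ≤ G i j) (hu : ∀ i, 0 < u i)
    (hRB : ∀ i, ((matAbs N + matAbs (Φ₁ * A - Φ₂) + 2 • (Φ₂ * G)) *ᵥ u) i < (cmpMat B *ᵥ u) i)
    {q : Fin n → ℝ} {ψ : (Fin n → ℝ) → Fin n → ℝ}
    (hψ : ∀ x y i, |ψ x i - ψ y i| ≤ (G *ᵥ vecAbs (x - y)) i)
    {zstar : Fin n → ℝ} (hzstar : ICPsol A q ψ zstar) {z : ℕ → Fin n → ℝ}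
    (hz : ∀ k, z (k + 1) = B⁻¹ *ᵥ modulusRhs N (Φ₁ * A - Φ₂) Φ₂ (Φ₁ *ᵥ q) ψ (z k)) :
    Tendsto z atTop (𝓝 zstar) := by
  have hR := matAbs_add_matAbs_add_two_nsmul_nonneg N (Φ₁ * A - Φ₂) hΦ₂ hΦ₂0 hG
  have hBu i := (dotProduct_nonneg_of_nonneg (hR i) fun j => (hu j).le).trans_lt (hRB i)
  have hfix : B *ᵥ zstar = modulusRhs N (Φ₁ * A - Φ₂) Φ₂ (Φ₁ *ᵥ q) ψ zstar := by
    rw [hzstar.modulusRhs_eq N hΦ₁ hΦ₁0 hΦ₂ hΦ₂0, hB]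
  have hstep k : B *ᵥ z (k + 1) = modulusRhs N (Φ₁ * A - Φ₂) Φ₂ (Φ₁ *ᵥ q) ψ (z k) := by
    rw [hz k, mulVec_mulVec, mul_nonsing_inv _ (isUnit_det_of_cmpMat hu hBu), one_mulVec]
  have hT := zMat_cmpMat B
  refine tendsto_of_abs_sub_le_mulVec (hT.inv_mul_nonneg hu hR hRB) hu
    (hT.inv_mul_mulVec_lt hu hR hRB) fun k i => ?_
  rw [← mulVec_mulVec]
  refine vecAbs_le_cmpMat_inv_mulVec hu hBu (x := z (k + 1) - zstar) (fun j => ?_) i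
  rw [mulVec_sub, hstep, hfix]
  exact abs_modulusRhs_sub_le N _ hΦ₂ hΦ₂0 _ hψ _ _ j

theorem stmt_12_general {n : ℕ} (A M₁ N₁ φ φ₁ φ₂ G U : Matrix (Fin n) (Fin n) ℝ)
    (hsplit : A = (M₁ + φ) - (N₁ + φ))
    (hφ : φ.IsDiag) (hφ₁ : PosDiag φ₁) (hφ₂ : PosDiag φ₂)
    (hG : ∀ i j, 0 ≤ G i j)
    (hU : PosDiag U)
    (hφ₂lt : ∀ i, 0 < φ₂ i i ∧ φ₂ i i < (φ₁ * Matrix.diagonal A.diag) i i)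
    (hpos : ∀ i, 0 < (((φ₂ - φ₁ * Matrix.diagonal A.diag + cmpMat (φ₁ * M₁ + φ₁ * φ) -
      matAbs (φ₁ * N₁ + φ₁ * φ) - φ₂ * G) * U) *ᵥ (fun _ => (1 : ℝ))) i) :
    specRad ((cmpMat (φ₁ * M₁) + matAbs (φ₁ * φ) + φ₂)⁻¹ *
        (matAbs (φ₁ * N₁ + φ₁ * φ) + matAbs (φ₁ * A - φ₂) + 2 • (φ₂ * G))) < 1 ∧
      ∀ (q : Fin n → ℝ) (ψ : (Fin n → ℝ) → (Fin n → ℝ)),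
        (∀ x y : Fin n → ℝ, ∀ i, |ψ x i - ψ y i| ≤ (G *ᵥ vecAbs (x - y)) i) →
        ∀ zstar : Fin n → ℝ, ICPsol A q ψ zstar →
          ∀ z : ℕ → Fin n → ℝ,
            (∀ k, z (k + 1) = (φ₁ * M₁ + φ₁ * φ + φ₂)⁻¹ *ᵥ
              ((φ₁ * N₁ + φ₁ * φ) *ᵥ z k +
                vecAbs ((φ₁ * A - φ₂) *ᵥ z k + φ₁ *ᵥ q + φ₂ *ᵥ ψ (z k)) -
                φ₁ *ᵥ q + φ₂ *ᵥ ψ (z k))) →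
            Filter.Tendsto z Filter.atTop (nhds zstar) := by
  set X := φ₁ * M₁ + φ₁ * φ
  set Z := φ₁ * N₁ + φ₁ * φ
  set u : Fin n → ℝ := U *ᵥ fun _ => 1
  have hφ₁A : φ₁ * A = X - Z := by rw [hsplit, Matrix.mul_sub, Matrix.mul_add, Matrix.mul_add]
  have hφ₁D : φ₁ * diagonal A.diag = diagonal (X - Z).diag := by
    rw [hφ₁.1.mul_diagonal_diag, hφ₁A]
  have hXZ i : 0 < φ₂ i i ∧ φ₂ i i < X i i - Z i i := by
    simpa only [hφ₁D, diagonal_apply_eq, diag_apply, Matrix.sub_apply] using hφ₂lt i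
  have hu i : 0 < u i := by simpa [u, hU.1.mulVec_apply] using hU.2 i
  have hR := matAbs_add_matAbs_add_two_nsmul_nonneg Z (φ₁ * A - φ₂) hφ₂.1 (fun i => (hφ₂.2 i).le) hG
  have hRB i : ((matAbs Z + matAbs (φ₁ * A - φ₂) + 2 • (φ₂ * G)) *ᵥ u) i
      < (cmpMat (X + φ₂) *ᵥ u) i := by
    rw [hφ₁A]
    refine matAbs_mulVec_lt_cmpMat_mulVec X Z φ₂ G hφ₂.1 hXZ (fun j => (hu j).le) ?_
    simpa only [u, mulVec_mulVec, hφ₁D] using hpos i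
  have hRW i := (hRB i).trans_le <| dotProduct_le_dotProduct_of_nonneg_right
    (cmpMat_add_add_apply_le (φ₁ * M₁) (φ₁ * φ) hφ₂.nonneg i) fun j => (hu j).le
  refine ⟨(zMat_cmpMat_add_matAbs_add _ (hφ₁.1.mul hφ) hφ₂.1).specRad_inv_mul_lt_one hu hR hRW,
    fun q ψ hψ zstar hzstar z hz => ?_⟩
  exact tendsto_of_modulusRhs_iterate (by rw [hφ₁A, add_sub_cancel]) hφ₁.1 (fun i => (hφ₁.2 i).le)
    hφ₂.1 (fun i => (hφ₂.2 i).le) hG hu hRB hψ hzstar hz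

/-- Theorem 4.4, case (0 < φ₂ < D_{φ₁}). -/
theorem stmt_12 {n : ℕ} (A M₁ N₁ φ φ₁ φ₂ G U : Matrix (Fin n) (Fin n) ℝ)
    (hA : HplusMatrix A)
    (hsplit : A = (M₁ + φ) - (N₁ + φ))
    (hHsplit : NonsingularMMatrix (cmpMat (M₁ + φ) - matAbs (N₁ + φ)))
    (hφ : φ.IsDiag) (hφ₁ : PosDiag φ₁) (hφ₂ : PosDiag φ₂)
    (hG : ∀ i j, 0 ≤ G i j)
    (hU : PosDiag U)
    (hUsdd : SDD ((cmpMat (M₁ + φ) - matAbs (N₁ + φ)) * U))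
    (hφ₂lt : ∀ i, 0 < φ₂ i i ∧ φ₂ i i < (φ₁ * Matrix.diagonal A.diag) i i)
    (hpos : ∀ i, 0 < (((φ₂ - φ₁ * Matrix.diagonal A.diag + cmpMat (φ₁ * M₁ + φ₁ * φ) -
      matAbs (φ₁ * N₁ + φ₁ * φ) - φ₂ * G) * U) *ᵥ (fun _ => (1 : ℝ))) i) :
    specRad ((cmpMat (φ₁ * M₁) + matAbs (φ₁ * φ) + φ₂)⁻¹ *
        (matAbs (φ₁ * N₁ + φ₁ * φ) + matAbs (φ₁ * A - φ₂) + 2 • (φ₂ * G))) < 1 ∧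
      ∀ (q : Fin n → ℝ) (ψ : (Fin n → ℝ) → (Fin n → ℝ)),
        (∀ x y : Fin n → ℝ, ∀ i, |ψ x i - ψ y i| ≤ (G *ᵥ vecAbs (x - y)) i) →
        ∀ zstar : Fin n → ℝ, ICPsol A q ψ zstar →
          ∀ z : ℕ → Fin n → ℝ,
            (∀ k, z (k + 1) = (φ₁ * M₁ + φ₁ * φ + φ₂)⁻¹ *ᵥ
              ((φ₁ * N₁ + φ₁ * φ) *ᵥ z k +
                vecAbs ((φ₁ * A - φ₂) *ᵥ z k + φ₁ *ᵥ q + φ₂ *ᵥ ψ (z k)) -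
                φ₁ *ᵥ q + φ₂ *ᵥ ψ (z k))) →
            Filter.Tendsto z Filter.atTop (nhds zstar) :=
  stmt_12_general A M₁ N₁ φ φ₁ φ₂ G U hsplit hφ hφ₁ hφ₂ hG hU hφ₂lt hpos
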